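/- Let M > 0 and σ < 0 be real numbers. There is no differentiable function s : [0,T) → ℝ with T > -2σ/√M such that s'(t) ≤ -(1/2) s(t)² + (1/2) M for all t ∈ [0,T) and s(0) ≤ √M · coth(σ). In other words, any differentiable solution of the differential inequality s' ≤ -s²/2 + M/2 with initial value s(0) ≤ √M coth(σ) ceases to exist (blows up to -∞) no later than time t* = -2σ/√M. -/

import Mathlib

open Set

/-- Hyperbolic cotangent. -/
noncomputable def coth (x : ℝ) : ℝ := Real.cosh x / Real.sinh x

/-!
With `q = √M`, the function `q * coth (σ + c * t)` solves `s' = (q ^ 2 - s ^ 2) / 2` for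
`c = q / 2` and tends to `-∞` as `t ↑ -σ / c`. Taking `c` slightly below `q / 2`, but still with
`-σ / c < T`, makes it a strict supersolution, so by the comparison principle `s` stays below it on
`[0, -σ / c)`. This is impossible: `s` is continuous, hence bounded below, on `[0, -σ / c]`.
-/

open Filter Topology

lemma coth_lt_neg_one {x : ℝ} (hx : x < 0) : coth x < -1 := by
  rw [coth, div_lt_iff_of_neg (Real.sinh_neg_iff.mpr hx)]
  linarith [Real.cosh_add_sinh x, Real.exp_pos x]

lemma hasDerivAt_coth {x : ℝ} (hx : x ≠ 0) : HasDerivAt coth (1 - coth x ^ 2) x := by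
  have hsinh : Real.sinh x ≠ 0 := Real.sinh_ne_zero.mpr hx
  refine ((Real.hasDerivAt_cosh x).div (Real.hasDerivAt_sinh x) hsinh).congr_deriv ?_
  rw [coth]
  field_simp

lemma tendsto_coth_nhdsLT_zero : Tendsto coth (𝓝[<] 0) atBot := by
  have hsinh : Tendsto Real.sinh (𝓝[<] 0) (𝓝[<] 0) :=
    tendsto_nhdsWithin_of_tendsto_nhds_of_eventually_within _
      (by simpa using Real.continuous_sinh.tendsto 0 |>.mono_left nhdsWithin_le_nhds)
      (eventually_nhdsWithin_of_forall fun _ hx => Real.sinh_neg_iff.mpr hx)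
  have hcosh : Tendsto Real.cosh (𝓝[<] 0) (𝓝 1) := by
    simpa using Real.continuous_cosh.tendsto 0 |>.mono_left nhdsWithin_le_nhds
  exact hcosh.pos_mul_atBot one_pos (tendsto_inv_nhdsLT_zero.comp hsinh)

lemma continuousOn_Icc_of_hasDerivWithinAt_Ico {s s' : ℝ → ℝ} {a b T : ℝ}
    (hs : ∀ t ∈ Ico a T, HasDerivWithinAt s (s' t) (Ico a T) t) (hbT : b < T) :
    ContinuousOn s (Icc a b) := fun t ht =>
  have hsub : Icc a b ⊆ Ico a T := Icc_subset_Ico_right hbT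
  (hs t (hsub ht)).continuousWithinAt.mono hsub

noncomputable def riccatiBarrier (q σ c t : ℝ) : ℝ := q * coth (σ + c * t)

lemma hasDerivAt_riccatiBarrier {q σ c t : ℝ} (ht : σ + c * t ≠ 0) :
    HasDerivAt (riccatiBarrier q σ c) (q * c * (1 - coth (σ + c * t) ^ 2)) t := by
  have hu : HasDerivAt (fun t => σ + c * t) c t := by
    simpa using ((hasDerivAt_id t).const_mul c).const_add σ
  have h := ((hasDerivAt_coth ht).comp t hu).const_mul q
  exact h.congr_deriv (by ring)

lemma riccati_lt_deriv_riccatiBarrier {q σ c t : ℝ} (hq : 0 < q) (hcq : c < q / 2)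
    (ht : σ + c * t < 0) :
    -(1/2) * riccatiBarrier q σ c t ^ 2 + (1/2) * q ^ 2 < q * c * (1 - coth (σ + c * t) ^ 2) := by
  have hcoth : 1 - coth (σ + c * t) ^ 2 < 0 := by nlinarith [coth_lt_neg_one ht]
  calc -(1/2) * riccatiBarrier q σ c t ^ 2 + (1/2) * q ^ 2
      = q * (q / 2) * (1 - coth (σ + c * t) ^ 2) := by rw [riccatiBarrier]; ring
    _ < q * c * (1 - coth (σ + c * t) ^ 2) :=
        mul_lt_mul_of_neg_right (by nlinarith) hcoth

lemma tendsto_riccatiBarrier {q σ c : ℝ} (hq : 0 < q) (hc : 0 < c) :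
    Tendsto (riccatiBarrier q σ c) (𝓝[<] (-σ / c)) atBot := by
  have hu : Tendsto (fun t => σ + c * t) (𝓝[<] (-σ / c)) (𝓝[<] 0) := by
    refine tendsto_nhdsWithin_of_tendsto_nhds_of_eventually_within _ ?_ ?_
    · have : Continuous (fun t => σ + c * t) := by fun_prop
      simpa [mul_div_cancel₀ _ hc.ne'] using (this.tendsto (-σ / c)).mono_left nhdsWithin_le_nhds
    · filter_upwards [self_mem_nhdsWithin] with t ht
      rw [mem_Iio, lt_div_iff₀ hc] at ht
      rw [mem_Iio]; linarith
  exact (tendsto_coth_nhdsLT_zero.comp hu).const_mul_atBot hq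

lemma le_riccatiBarrier {s s' : ℝ → ℝ} {T q σ c b : ℝ} (hq : 0 < q) (hc : 0 ≤ c)
    (hcq : c < q / 2) (hb : σ + c * b < 0) (hbT : b < T)
    (hs : ∀ t ∈ Ico 0 T, HasDerivWithinAt s (s' t) (Ico 0 T) t)
    (hineq : ∀ t ∈ Ico 0 T, s' t ≤ -(1/2) * s t ^ 2 + (1/2) * q ^ 2)
    (h0 : s 0 ≤ q * coth σ) :
    ∀ t ∈ Icc 0 b, s t ≤ riccatiBarrier q σ c t := by
  have hneg : ∀ t ∈ Icc 0 b, σ + c * t < 0 := fun t ht => by nlinarith [ht.2]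
  have hsub : Ico 0 b ⊆ Ico 0 T := Ico_subset_Ico_right hbT.le
  refine image_le_of_deriv_right_lt_deriv_boundary'
    (continuousOn_Icc_of_hasDerivWithinAt_Ico hs hbT)
    (fun t ht => (hs t (hsub ht)).mono_of_mem_nhdsWithin ?_) (by simpa [riccatiBarrier] using h0)
    (fun t ht => (hasDerivAt_riccatiBarrier (hneg t ht).ne).continuousAt.continuousWithinAt)
    (fun t ht => (hasDerivAt_riccatiBarrier (hneg t (Ico_subset_Icc_self ht)).ne).hasDerivWithinAt)
    fun t ht heq => ?_
  · exact mem_of_superset (Ico_mem_nhdsGE (hsub ht).2) (Ico_subset_Ico_left ht.1)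
  · calc s' t ≤ -(1/2) * s t ^ 2 + (1/2) * q ^ 2 := hineq t (hsub ht)
      _ < _ := heq ▸ riccati_lt_deriv_riccatiBarrier hq hcq (hneg t (Ico_subset_Icc_self ht))

/-- Finite-time wave breaking (steepening lemma blow-up): no differentiable
solution of the differential inequality `s' ≤ -s²/2 + M/2` with initial value
`s 0 ≤ √M coth σ` (with `σ < 0`) can exist on `[0, T)` for `T > -2σ/√M`. -/
theorem no_global_solution_of_riccati_inequality
    (M σ : ℝ) (hM : 0 < M) (hσ : σ < 0) :
    ¬ ∃ (T : ℝ) (s s' : ℝ → ℝ),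
      T > -2 * σ / Real.sqrt M ∧
      (∀ t ∈ Set.Ico (0 : ℝ) T, HasDerivWithinAt s (s' t) (Set.Ico 0 T) t) ∧
      (∀ t ∈ Set.Ico (0 : ℝ) T, s' t ≤ -(1/2) * (s t)^2 + (1/2) * M) ∧
      s 0 ≤ Real.sqrt M * coth σ := by
  rintro ⟨T, s, s', hT, hs, hineq, h0⟩
  have hq : 0 < √M := Real.sqrt_pos.mpr hM
  rw [← Real.sq_sqrt hM.le] at hineq
  have hT0 : 0 < T := (div_pos (by linarith) hq).trans hT
  obtain ⟨c, hTc, hcq⟩ : ∃ c, -σ / T < c ∧ c < √M / 2 := by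
    refine exists_between ?_
    rw [gt_iff_lt, div_lt_iff₀ hq] at hT
    rw [div_lt_iff₀ hT0]
    linarith
  have hc : 0 < c := (div_pos (neg_pos.mpr hσ) hT0).trans hTc
  have hKT : -σ / c < T := by rwa [div_lt_comm₀ hc hT0]
  obtain ⟨m, hm⟩ := isCompact_Icc.bddBelow_image (continuousOn_Icc_of_hasDerivWithinAt_Ico hs hKT)
  obtain ⟨t, hBt, ht⟩ := (((tendsto_riccatiBarrier hq hc).eventually_lt_atBot m).and
    (Ioo_mem_nhdsLT (div_pos (neg_pos.mpr hσ) hc))).exists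
  have hst : s t ≤ riccatiBarrier (√M) σ c t :=
    le_riccatiBarrier hq hc.le hcq (by linarith [(lt_div_iff₀ hc).mp ht.2]) (ht.2.trans hKT)
      hs hineq h0 t ⟨ht.1.le, le_rfl⟩
  linarith [hm ⟨t, ⟨ht.1.le, ht.2.le⟩, rfl⟩]
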